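/- Let q be a prime power, g a generator of F_q^×, d an integer, and ξ₀ a root in F_{q^3} of the irreducible polynomial x^3 - x^2 + g^{d-1} x - g^d ∈ F_q[x]. Assume ξ₀ is not a p-th power in F_{q^3}^× for any prime p dividing q^2 + q + 1. Then for any integer k with gcd(3k + d, q - 1) = 1, the element ξ_k := g^k ξ₀ is a generator of F_{q^3}^×, with Tr_{F_{q^3}/F_q}(ξ_k) = g^k and Tr_{F_{q^3}/F_q}(ξ_k^{-1}) = g^{-k-1}. -/

import Mathlib

/-! The minimal polynomial of `ξ₀` is the cubic `P`, which fills the whole cubic extension, so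
`Tr ξ₀ = 1` and `N ξ₀ = g ^ d`; the minimal polynomial of `ξ₀⁻¹` is the normalised reverse of `P`,
so `Tr ξ₀⁻¹ = g ^ (d - 1) / g ^ d`, and the trace identities for `ξₖ = g ^ k ξ₀` follow by
`F`-linearity. For primitivity, let `p` be a prime dividing `|E^×| = (q - 1)(q ^ 2 + q + 1)`.
If `p ∣ q - 1`, then `ξₖ` is not a `p`-th power because its norm `g ^ (3k + d)` generates `F^×`.
Otherwise `p (q - 1)` divides `|E^×|`, so `g ^ k` is a `p`-th power in the cyclic group `E^×`, and
`ξₖ` being a `p`-th power would make `ξ₀` one. -/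

open Polynomial Module IntermediateField Subgroup

section Minpoly

variable {K L : Type*} [Field K] [Field L] [Algebra K L] {x : L}

theorem IntermediateField.adjoin_simple_inv (x : L) : K⟮x⁻¹⟯ = K⟮x⟯ :=
  le_antisymm (adjoin_simple_le_iff.mpr (inv_mem (mem_adjoin_simple_self K x)))
    (adjoin_simple_le_iff.mpr (by simpa using inv_mem (mem_adjoin_simple_self K x⁻¹)))

theorem natDegree_minpoly_inv (hx : IsIntegral K x) :
    (minpoly K x⁻¹).natDegree = (minpoly K x).natDegree := by
  rw [← adjoin.finrank hx, ← adjoin.finrank hx.inv, adjoin_simple_inv]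

theorem minpoly_inv_eq_C_mul_reverse (hx : IsIntegral K x) (h0 : x ≠ 0) :
    minpoly K x⁻¹ = C ((minpoly K x).coeff 0)⁻¹ * (minpoly K x).reverse := by
  have hc : (minpoly K x).coeff 0 ≠ 0 := minpoly.coeff_zero_ne_zero hx h0
  have hdeg : (minpoly K x).reverse.natDegree = (minpoly K x).natDegree := by
    rw [reverse_natDegree, natTrailingDegree_eq_zero.mpr (.inr hc), Nat.sub_zero]
  have hmonic : (C ((minpoly K x).coeff 0)⁻¹ * (minpoly K x).reverse).Monic := by
    rw [Monic, leadingCoeff_mul, leadingCoeff_C, reverse_leadingCoeff,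
      trailingCoeff_eq_coeff_zero hc, inv_mul_cancel₀ hc]
  have hroot : aeval x⁻¹ (C ((minpoly K x).coeff 0)⁻¹ * (minpoly K x).reverse) = 0 := by
    have : Invertible x := invertibleOfNonzero h0
    have hrev : eval₂ (algebraMap K L) (⅟x) (minpoly K x).reverse = 0 := by
      rw [eval₂_reverse_eq_zero_iff, ← aeval_def, minpoly.aeval]
    rw [aeval_mul, aeval_def x⁻¹ (minpoly K x).reverse, ← invOf_eq_inv, hrev, mul_zero]
  refine (eq_of_monic_of_dvd_of_natDegree_le (minpoly.monic hx.inv) hmonic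
    (minpoly.dvd K _ hroot) ?_).symm
  rw [natDegree_C_mul (inv_ne_zero hc), hdeg, natDegree_minpoly_inv hx]

theorem nextCoeff_minpoly_inv (hx : IsIntegral K x) (h0 : x ≠ 0) :
    (minpoly K x⁻¹).nextCoeff = (minpoly K x).coeff 1 / (minpoly K x).coeff 0 := by
  have hpos := minpoly.natDegree_pos hx
  rw [nextCoeff_of_natDegree_pos (natDegree_minpoly_inv hx ▸ hpos), natDegree_minpoly_inv hx,
    minpoly_inv_eq_C_mul_reverse hx h0, coeff_C_mul, coeff_reverse, revAt_le (Nat.sub_le _ _),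
    Nat.sub_sub_self hpos, div_eq_inv_mul]

variable [FiniteDimensional K L]

theorem finrank_adjoin_simple_eq_one (h : (minpoly K x).natDegree = finrank K L) :
    finrank K⟮x⟯ L = 1 := by
  have htower := finrank_mul_finrank K K⟮x⟯ L
  rw [adjoin.finrank (.of_finite K x), h] at htower
  exact (Nat.mul_eq_left finrank_pos.ne').mp htower

theorem trace_eq_neg_nextCoeff_minpoly (h : (minpoly K x).natDegree = finrank K L) :
    Algebra.trace K L x = -(minpoly K x).nextCoeff := by
  rw [trace_eq_finrank_mul_minpoly_nextCoeff, finrank_adjoin_simple_eq_one h, Nat.cast_one,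
    one_mul]

theorem norm_eq_neg_one_pow_mul_coeff_zero_minpoly (h : (minpoly K x).natDegree = finrank K L) :
    Algebra.norm K x = (-1) ^ finrank K L * (minpoly K x).coeff 0 := by
  have hgen :=
    Algebra.PowerBasis.norm_gen_eq_coeff_zero_minpoly (adjoin.powerBasis (.of_finite K x))
  rw [adjoin.powerBasis_gen, adjoin.powerBasis_dim, minpoly_gen, h] at hgen
  rw [Algebra.norm_eq_norm_adjoin, finrank_adjoin_simple_eq_one h, pow_one, hgen]

theorem trace_inv_eq_neg_coeff_one_div_coeff_zero (h : (minpoly K x).natDegree = finrank K L)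
    (h0 : x ≠ 0) :
    Algebra.trace K L x⁻¹ = -((minpoly K x).coeff 1 / (minpoly K x).coeff 0) := by
  have hinv : (minpoly K x⁻¹).natDegree = finrank K L := by
    rw [natDegree_minpoly_inv (.of_finite K x), h]
  rw [trace_eq_neg_nextCoeff_minpoly hinv, nextCoeff_minpoly_inv (.of_finite K x) h0]

end Minpoly

section Cubic

variable {K L : Type*} [Field K] [Field L] [Algebra K L] {x : L} {a b c : K}

theorem natDegree_minpoly_eq_finrank_of_eq_cubic (hL : finrank K L = 3)
    (hx : minpoly K x = X ^ 3 - C a * X ^ 2 + C b * X - C c) :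
    (minpoly K x).natDegree = finrank K L := by
  rw [hx, hL]; compute_degree!

variable [FiniteDimensional K L]

theorem trace_eq_of_minpoly_eq_cubic (hL : finrank K L = 3)
    (hx : minpoly K x = X ^ 3 - C a * X ^ 2 + C b * X - C c) : Algebra.trace K L x = a := by
  have hdeg := natDegree_minpoly_eq_finrank_of_eq_cubic hL hx
  rw [trace_eq_neg_nextCoeff_minpoly hdeg, nextCoeff_of_natDegree_pos (by omega), hdeg, hL, hx]
  simp [coeff_X_pow]

theorem norm_eq_of_minpoly_eq_cubic (hL : finrank K L = 3)
    (hx : minpoly K x = X ^ 3 - C a * X ^ 2 + C b * X - C c) : Algebra.norm K x = c := by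
  rw [norm_eq_neg_one_pow_mul_coeff_zero_minpoly (natDegree_minpoly_eq_finrank_of_eq_cubic hL hx),
    hL, hx]
  norm_num [coeff_X_pow]

theorem trace_inv_eq_of_minpoly_eq_cubic (hL : finrank K L = 3)
    (hx : minpoly K x = X ^ 3 - C a * X ^ 2 + C b * X - C c) :
    Algebra.trace K L x⁻¹ = b / c := by
  have hdeg := natDegree_minpoly_eq_finrank_of_eq_cubic hL hx
  have h0 : x ≠ 0 := by
    rintro rfl
    rw [minpoly.zero, natDegree_X, hL] at hdeg
    norm_num at hdeg
  rw [trace_inv_eq_neg_coeff_one_div_coeff_zero hdeg h0, hx]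
  simp [coeff_X_pow, coeff_X, div_neg]

end Cubic

section CyclicPowers

variable {G : Type*} [CommGroup G] [IsCyclic G] [Finite G] {p : ℕ}

theorem IsCyclic.exists_pow_eq_of_pow_card_div_eq_one (hp : p ∣ Nat.card G) {x : G}
    (hx : x ^ (Nat.card G / p) = 1) : ∃ y, y ^ p = x := by
  have hle : (powMonoidHom p : G →* G).range ≤ (powMonoidHom (Nat.card G / p)).ker := by
    rintro _ ⟨y, rfl⟩
    simp [← pow_mul, Nat.mul_div_cancel' hp, pow_card_eq_one']
  have hcard : Nat.card (powMonoidHom (Nat.card G / p) : G →* G).ker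
      ≤ Nat.card (powMonoidHom p : G →* G).range := by
    rw [IsCyclic.card_powMonoidHom_ker, IsCyclic.card_powMonoidHom_range,
      Nat.gcd_eq_right hp, Nat.gcd_eq_right (Nat.div_dvd_of_dvd hp)]
  obtain ⟨y, hy⟩ : x ∈ (powMonoidHom p : G →* G).range :=
    eq_of_le_of_card_ge hle hcard ▸ MonoidHom.mem_ker.mpr hx
  exact ⟨y, hy⟩

theorem IsCyclic.forall_mem_zpowers_of_not_exists_pow_eq {x : G}
    (hx : ∀ p : ℕ, p.Prime → p ∣ Nat.card G → ¬∃ y, y ^ p = x) : ∀ y, y ∈ zpowers x := by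
  have hord : orderOf x = Nat.card G :=
    orderOf_eq_of_pow_and_pow_div_prime Nat.card_pos pow_card_eq_one' fun p hp hpG h =>
      hx p hp hpG (exists_pow_eq_of_pow_card_div_eq_one hpG h)
  rw [← eq_top_iff', ← card_eq_iff_eq_top, Nat.card_zpowers, hord]

end CyclicPowers

theorem not_exists_pow_eq_of_forall_mem_zpowers {G : Type*} [Group G] [Finite G] {x : G}
    (hx : ∀ y, y ∈ zpowers x) {p : ℕ} (hp : p.Prime) (hpG : p ∣ Nat.card G) :
    ¬∃ y, y ^ p = x := by
  rintro ⟨y, rfl⟩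
  have h : orderOf (y ^ p) ∣ Nat.card G / p := orderOf_dvd_of_pow_eq_one <| by
    rw [← pow_mul, Nat.mul_div_cancel' hpG, pow_card_eq_one']
  rw [orderOf_eq_card_of_forall_mem_zpowers hx] at h
  exact absurd (Nat.le_of_dvd (Nat.div_pos (Nat.le_of_dvd Nat.card_pos hpG) hp.pos) h)
    (not_le.mpr (Nat.div_lt_self Nat.card_pos hp.one_lt))

theorem forall_mem_zpowers_zpow_of_gcd_eq_one {G : Type*} [Group G] {g : G}
    (hg : ∀ x, x ∈ zpowers g) {m : ℤ} (hm : Int.gcd m (Nat.card G) = 1) :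
    ∀ x, x ∈ zpowers (g ^ m) := by
  have hbezout := Int.gcd_eq_gcd_ab m (Nat.card G)
  rw [hm, Nat.cast_one] at hbezout
  have hpow : (g ^ m) ^ m.gcdA (Nat.card G) = g := by
    rw [← zpow_mul]
    conv_rhs => rw [← zpow_one g, hbezout, zpow_add, zpow_mul g (Nat.card G : ℤ),
      zpow_natCast, pow_card_eq_one', one_zpow, mul_one]
  have hgen : g ∈ zpowers (g ^ m) := by
    simpa only [hpow] using zpow_mem (mem_zpowers (g ^ m)) (m.gcdA (Nat.card G))
  exact fun x => zpowers_le.mpr hgen (hg x)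

theorem pow_three_sub_one_eq (q : ℕ) : q ^ 3 - 1 = (q ^ 2 + q + 1) * (q - 1) := by
  rcases q with _ | q
  · rfl
  · simp only [Nat.add_sub_cancel]
    ring_nf
    omega

theorem finrank_eq_of_card_eq_card_pow {F E : Type*} [Field F] [Ring E] [Fintype F] [Fintype E]
    [Algebra F E] {n : ℕ} (h : Fintype.card E = Fintype.card F ^ n) : finrank F E = n :=
  Nat.pow_right_injective Fintype.one_lt_card (card_eq_pow_finrank.symm.trans h)

section FiniteField

variable {F E : Type*} [Field F] [Field E] [Finite E] [Algebra F E]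

theorem FiniteField.exists_pow_eq_algebraMap {p : ℕ} (hp : p * Nat.card Fˣ ∣ Nat.card Eˣ)
    (c : Fˣ) : ∃ y : Eˣ, y ^ p = Units.map (algebraMap F E : F →* E) c := by
  refine IsCyclic.exists_pow_eq_of_pow_card_div_eq_one (dvd_of_mul_right_dvd hp) ?_
  obtain ⟨m, hm⟩ : Nat.card Fˣ ∣ Nat.card Eˣ / p := Nat.dvd_div_of_mul_dvd hp
  rw [← map_pow, hm, pow_mul, pow_card_eq_one', one_pow, map_one]

theorem FiniteField.forall_mem_zpowers_algebraMap_mul [Finite F] {c : Fˣ} {ξ : Eˣ}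
    (hnorm : ∀ y : Fˣ, y ∈ zpowers
      (Units.map (Algebra.norm F : E →* F) (Units.map (algebraMap F E : F →* E) c * ξ)))
    (hξ : ∀ p : ℕ, p.Prime → p * Nat.card Fˣ ∣ Nat.card Eˣ → ¬∃ y, y ^ p = ξ) :
    ∀ x, x ∈ zpowers (Units.map (algebraMap F E : F →* E) c * ξ) := by
  refine IsCyclic.forall_mem_zpowers_of_not_exists_pow_eq fun p hp hpE ⟨y, hy⟩ => ?_
  by_cases hpF : p ∣ Nat.card Fˣ
  · exact not_exists_pow_eq_of_forall_mem_zpowers hnorm hp hpF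
      ⟨Units.map _ y, by rw [← map_pow, hy]⟩
  · have hFE : Nat.card Fˣ ∣ Nat.card Eˣ :=
      card_dvd_of_injective _ (Units.map_injective (algebraMap F E).injective)
    have hpFE : p * Nat.card Fˣ ∣ Nat.card Eˣ :=
      Nat.Coprime.mul_dvd_of_dvd_of_dvd ((Nat.Prime.coprime_iff_not_dvd hp).mpr hpF) hpE hFE
    obtain ⟨w, hw⟩ := exists_pow_eq_algebraMap hpFE c
    exact hξ p hp hpFE ⟨w⁻¹ * y, by rw [mul_pow, inv_pow, hy, hw, inv_mul_cancel_left]⟩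

end FiniteField

theorem stmt5 {F E : Type*} [Field F] [Field E] [Fintype F] [Fintype E]
    [Algebra F E] (q : ℕ) (hF : Fintype.card F = q) (hE : Fintype.card E = q ^ 3)
    (g : Fˣ) (hg : ∀ x : Fˣ, x ∈ Subgroup.zpowers g) (d : ℤ)
    (P : F[X])
    (hP : P = X ^ 3 - X ^ 2 + C ((g ^ (d - 1) : Fˣ) : F) * X - C ((g ^ d : Fˣ) : F))
    (hirr : Irreducible P) (ξ₀ : E) (hroot : aeval ξ₀ P = 0)
    (hnp : ∀ p : ℕ, p.Prime → p ∣ q ^ 2 + q + 1 → ¬ ∃ y : E, y ^ p = ξ₀)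
    (k : ℤ) (hgcd : Int.gcd (3 * k + d) (q - 1 : ℕ) = 1) :
    ∃ ζ : Eˣ, (ζ : E) = algebraMap F E ((g ^ k : Fˣ) : F) * ξ₀ ∧
      (∀ x : Eˣ, x ∈ Subgroup.zpowers ζ) ∧
      Algebra.trace F E (algebraMap F E ((g ^ k : Fˣ) : F) * ξ₀) = ((g ^ k : Fˣ) : F) ∧
      Algebra.trace F E (algebraMap F E ((g ^ k : Fˣ) : F) * ξ₀)⁻¹
        = ((g ^ (-k - 1) : Fˣ) : F) := by
  have hrank : finrank F E = 3 := finrank_eq_of_card_eq_card_pow (by rw [hE, hF])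
  have hmin : minpoly F ξ₀
      = X ^ 3 - C 1 * X ^ 2 + C ((g ^ (d - 1) : Fˣ) : F) * X - C ((g ^ d : Fˣ) : F) := by
    rw [map_one, one_mul, ← hP]
    exact (minpoly.eq_of_irreducible_of_monic hirr hroot (by rw [hP]; monicity!)).symm
  have hnorm := norm_eq_of_minpoly_eq_cubic hrank hmin
  have hξ₀ : ξ₀ ≠ 0 := fun h => (g ^ d).ne_zero (by rw [← hnorm, h, Algebra.norm_zero])
  have hcardF : Nat.card Fˣ = q - 1 := by rw [Nat.card_units, Nat.card_eq_fintype_card, hF]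
  have hcardE : Nat.card Eˣ = (q ^ 2 + q + 1) * Nat.card Fˣ := by
    rw [Nat.card_units, Nat.card_eq_fintype_card, hE, hcardF, pow_three_sub_one_eq]
  refine ⟨Units.map (algebraMap F E : F →* E) (g ^ k) * Units.mk0 ξ₀ hξ₀, rfl, ?_, ?_, ?_⟩
  · refine FiniteField.forall_mem_zpowers_algebraMap_mul ?_ fun p hp hpE ⟨y, hy⟩ => ?_
    · have hnormζ : Units.map (Algebra.norm F : E →* F)
          (Units.map (algebraMap F E : F →* E) (g ^ k) * Units.mk0 ξ₀ hξ₀) = g ^ (3 * k + d) := by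
        rw [zpow_add, zpow_mul]
        ext
        simp [Algebra.norm_algebraMap, hnorm, hrank]
      exact hnormζ ▸ forall_mem_zpowers_zpow_of_gcd_eq_one hg (hcardF ▸ hgcd)
    · rw [hcardE] at hpE
      exact hnp p hp (Nat.dvd_of_mul_dvd_mul_right Nat.card_pos hpE)
        ⟨y, by rw [← Units.val_pow_eq_pow_val, hy, Units.val_mk0]⟩
  · rw [← Algebra.smul_def, map_smul, trace_eq_of_minpoly_eq_cubic hrank hmin, smul_eq_mul,
      mul_one]
  · rw [mul_inv, ← map_inv₀, ← Algebra.smul_def, map_smul,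
      trace_inv_eq_of_minpoly_eq_cubic hrank hmin, smul_eq_mul]
    simp only [Units.val_zpow_eq_zpow_val]
    rw [← zpow_neg, ← zpow_sub₀ g.ne_zero, ← zpow_add₀ g.ne_zero]
    ring_nf
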